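/- Let M →^R A be a relative Rota-Baxter algebra and (N →^S B, l, r) a bimodule over it. For each k ≥ 1, define ψ_k : Hom(M^⊗k, B) → Hom(k[C_{k+1}] ⊗ M^⊗(k+1), N) by ψ_k(f)([1]; m₁,…,m_{k+1}) = (−1)^{k+1} l(m₁, f(m₂,…,m_{k+1})), ψ_k(f)([r]; …) = 0 for 2 ≤ r ≤ k, and ψ_k(f)([k+1]; m₁,…,m_{k+1}) = r(f(m₁,…,m_k), m_{k+1}). Then ψ commutes with the differentials: δ_D ∘ ψ_k = ψ_{k+1} ∘ δ_{M,B}, where δ_{M,B} is the Hochschild differential of M_Tot with coefficients in B_{▷,◁} and δ_D is the dendriform cohomology differential of (M, ≺_R, ≻_R) with coefficients in N. -/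

import Mathlib

/-- The Hochschild-type coboundary operator associated with a multiplication `mu`
and a pair of actions `aL`, `aR`. -/
def hochD {X Y : Type*} [AddCommGroup Y] (mu : X → X → X)
    (aL : X → Y → Y) (aR : Y → X → Y) {k : ℕ}
    (f : (Fin k → X) → Y) : (Fin (k + 1) → X) → Y :=
  fun a =>
    aL (a 0) (f (fun j => a j.succ))
      + ∑ i ∈ Finset.range k, ((-1 : ℤ) ^ (i + 1)) •
          f (fun j => if (j : ℕ) < i then a j.castSucc
              else if (j : ℕ) = i then mu (a j.castSucc) (a j.succ)
              else a j.succ)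
      + ((-1 : ℤ) ^ (k + 1)) • aR (f (fun j => a j.castSucc)) (a (Fin.last k))

/-- The Hochschild coboundary `δ_{M,B}` of the total algebra `M_Tot` with
coefficients in the bimodule `B_{▷,◁}`. -/
def dMB {A M B N : Type*} [AddCommGroup A] [AddCommGroup M] [AddCommGroup B]
    (al : A → M → M) (ar : M → A → M) (bl : A → B → B) (br : B → A → B)
    (R : M → A) (S : N → B) (l : M → B → N) (r : B → M → N) {k : ℕ}
    (γ : (Fin k → M) → B) : (Fin (k + 1) → M) → B :=
  hochD (fun m m' => al (R m) m' + ar m (R m'))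
    (fun m b => bl (R m) b - S (l m b))
    (fun b m => br b (R m) - S (r b m)) γ

/-- The multilinear extension `f̂` of a dendriform cochain `f`, used to define the
dendriform coboundary via the Hochschild complex of `D_Tot ⊕ D` with coefficients
in `E_Tot ⊕ E`. -/
def hatD {D E : Type*} [AddCommGroup E] {n : ℕ}
    (g : Fin n → (Fin n → D) → E) : (Fin n → D × D) → E × E :=
  fun z =>
    (∑ i : Fin n, g i (fun j => (z j).1),
     ∑ i : Fin n, g i (Function.update (fun j => (z j).1) i (z i).2))

/-- The dendriform coboundary `δ_D` of a dendriform algebra `(D, ≺, ≻)` with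
coefficients in a representation `E`, defined via the Hochschild coboundary of the
associative algebra `D_Tot ⊕ D` with coefficients in `E_Tot ⊕ E`. -/
def deltaD {D E : Type*} [AddCommGroup D] [AddCommGroup E]
    (pre suc : D → D → D) (pde sde : D → E → E) (ped sed : E → D → E) {n : ℕ}
    (g : Fin n → (Fin n → D) → E) : Fin (n + 1) → (Fin (n + 1) → D) → E :=
  fun i x =>
    (hochD
      (fun p q => (pre p.1 q.1 + suc p.1 q.1, suc p.1 q.2 + pre p.2 q.1))
      (fun p w => (pde p.1 w.1 + sde p.1 w.1, sde p.1 w.2 + pde p.2 w.1))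
      (fun w p => (ped w.1 p.1 + sed w.1 p.1, sed w.1 p.2 + ped w.2 p.1))
      (hatD g) (fun j => if j = i then ((0 : D), x j) else (x j, 0))).2

/-- The map `ψ_k` from Hochschild cochains of `M_Tot` with coefficients in
`B_{▷,◁}` to dendriform cochains of `(M, ≺_R, ≻_R)` with coefficients in `N`. -/
def psiMap {M B N : Type*} [AddCommGroup N]
    (l : M → B → N) (r : B → M → N) {k : ℕ}
    (f : (Fin k → M) → B) : Fin (k + 1) → (Fin (k + 1) → M) → N :=
  fun i m =>
    if (i : ℕ) = 0 then ((-1 : ℤ) ^ (k + 1)) • l (m 0) (f (fun j => m j.succ))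
    else if (i : ℕ) = k then r (f (fun j => m j.castSucc)) (m (Fin.last k))
    else 0

/-!
`ψ_k(f)` lives only in the components `[1]` and `[k+1]`, so its multilinear extension to
`M_Tot ⊕ M` only sees the first letter (through `l`) and the last letter (through `r`) of a
word. Hence in `δ_D ψ_k(f)([i]; x)`, computed on the word where `x_i` sits in the second summand,
almost every term vanishes. For `1 < i < k + 2` four terms survive and cancel in pairs by
`l(a·m, b) = a·l(m, b)` and `r(b, m·a) = r(b, m)·a`. For `i = 1` (resp. `i = k + 2`) each
surviving term is `l(x_1, -)` (resp. `r(-, x_{k+2})`) applied to a term of `δ_{M,B} f`, once the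
actions of `A` on `M` and `N` are moved onto `B` by the other compatibilities of `l` (resp. `r`).
-/

open Finset

section Merge

variable {X : Type*} (mu : X → X → X) {n : ℕ}

def mergeAt (i : ℕ) (a : Fin (n + 1) → X) : Fin n → X := fun j =>
  if (j : ℕ) < i then a j.castSucc
  else if (j : ℕ) = i then mu (a j.castSucc) (a j.succ)
  else a j.succ

lemma hochD_apply {Y : Type*} [AddCommGroup Y] (aL : X → Y → Y) (aR : Y → X → Y)
    (f : (Fin n → X) → Y) (a : Fin (n + 1) → X) :
    hochD mu aL aR f a = aL (a 0) (f fun j => a j.succ)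
      + ∑ i ∈ range n, (-1 : ℤ) ^ (i + 1) • f (mergeAt mu i a)
      + (-1 : ℤ) ^ (n + 1) • aR (f fun j => a j.castSucc) (a (Fin.last n)) := rfl

@[simp] lemma mergeAt_zero_apply_zero (a : Fin (n + 2) → X) :
    mergeAt mu 0 a 0 = mu (a 0) (a 1) := rfl

@[simp] lemma mergeAt_zero_apply_succ (a : Fin (n + 2) → X) (j : Fin n) :
    mergeAt mu 0 a j.succ = a j.succ.succ := rfl

@[simp] lemma mergeAt_succ_apply_zero (i : ℕ) (a : Fin (n + 2) → X) :
    mergeAt mu (i + 1) a 0 = a 0 := rfl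

@[simp] lemma mergeAt_succ_apply_succ (i : ℕ) (a : Fin (n + 2) → X) (j : Fin n) :
    mergeAt mu (i + 1) a j.succ = mergeAt mu i (fun j => a j.succ) j := by
  simp [mergeAt]

@[simp] lemma mergeAt_apply_castSucc (i : ℕ) (a : Fin (n + 2) → X) (j : Fin n) :
    mergeAt mu i a j.castSucc = mergeAt mu i (fun j => a j.castSucc) j := by
  simp [mergeAt]

lemma mergeAt_apply_of_le {i : ℕ} (h : n ≤ i) (a : Fin (n + 1) → X) (j : Fin n) :
    mergeAt mu i a j = a j.castSucc :=
  if_pos (j.isLt.trans_le h)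

lemma mergeAt_last_apply_last (a : Fin (n + 2) → X) :
    mergeAt mu n a (Fin.last n) = mu (a (Fin.last n).castSucc) (a (Fin.last (n + 1))) := by
  simp [mergeAt]

lemma mergeAt_apply_last_of_lt {i : ℕ} (h : i < n) (a : Fin (n + 2) → X) :
    mergeAt mu i a (Fin.last n) = a (Fin.last (n + 1)) := by
  simp [mergeAt, h.not_gt, h.ne']

lemma map_mergeAt {Y : Type*} (nu : Y → Y → Y) (g : X → Y)
    (hg : ∀ x y, g (mu x y) = nu (g x) (g y)) (i : ℕ) (a : Fin (n + 1) → X) (j : Fin n) :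
    g (mergeAt mu i a j) = mergeAt nu i (fun j => g (a j)) j := by
  unfold mergeAt
  split_ifs <;> simp [hg]

end Merge

section Semidirect

variable {D : Type*}

def semidirectMul [Add D] (pre suc : D → D → D) (p q : D × D) : D × D :=
  (pre p.1 q.1 + suc p.1 q.1, suc p.1 q.2 + pre p.2 q.1)

def liftAt [Zero D] {n : ℕ} (i : Fin n) (x : Fin n → D) : Fin n → D × D :=
  fun j => if j = i then (0, x j) else (x j, 0)

lemma fst_mergeAt_semidirectMul [AddCommMagma D] (pre suc : D → D → D) {n : ℕ} (i : ℕ)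
    (a : Fin (n + 1) → D × D) (j : Fin n) :
    (mergeAt (semidirectMul pre suc) i a j).1
      = mergeAt (fun x y => suc x y + pre x y) i (fun j => (a j).1) j :=
  map_mergeAt _ _ Prod.fst (fun _ _ => add_comm _ _) i a j

lemma deltaD_apply {E : Type*} [AddCommGroup D] [AddCommGroup E]
    (pre suc : D → D → D) (pde sde : D → E → E) (ped sed : E → D → E) {n : ℕ}
    (g : Fin n → (Fin n → D) → E) (i : Fin (n + 1)) (x : Fin (n + 1) → D) :
    deltaD pre suc pde sde ped sed g i x =
      (hochD (semidirectMul pre suc)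
        (fun p w => (pde p.1 w.1 + sde p.1 w.1, sde p.1 w.2 + pde p.2 w.1))
        (fun w p => (ped w.1 p.1 + sed w.1 p.1, sed w.1 p.2 + ped w.2 p.1))
        (hatD g) (liftAt i x)).2 := rfl

end Semidirect

section Psi

variable {M B N : Type*} [AddCommGroup N] (l : M → B → N) (r : B → M → N) {k : ℕ}

lemma psiMap_zero_apply (f : (Fin k → M) → B) (x : Fin (k + 1) → M) :
    psiMap l r f 0 x = (-1 : ℤ) ^ (k + 1) • l (x 0) (f fun j => x j.succ) :=
  if_pos rfl

lemma psiMap_last_apply (f : (Fin (k + 1) → M) → B) (x : Fin (k + 2) → M) :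
    psiMap l r f (Fin.last (k + 1)) x = r (f fun j => x j.castSucc) (x (Fin.last (k + 1))) := by
  simp [psiMap]

lemma psiMap_apply_of_ne (f : (Fin k → M) → B) {i : Fin (k + 1)} (h0 : i ≠ 0)
    (hlast : i ≠ Fin.last k) (x : Fin (k + 1) → M) : psiMap l r f i x = 0 :=
  (if_neg (Fin.val_ne_iff.2 h0)).trans (if_neg (Fin.val_ne_iff.2 hlast))

lemma sum_psiMap_apply (f : (Fin (k + 1) → M) → B) (v : Fin (k + 2) → Fin (k + 2) → M) :
    ∑ i, psiMap l r f i (v i) = (-1 : ℤ) ^ (k + 2) • l (v 0 0) (f fun j => v 0 j.succ)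
      + r (f fun j => v (Fin.last (k + 1)) j.castSucc) (v (Fin.last (k + 1)) (Fin.last (k + 1))) := by
  rw [Fintype.sum_eq_add 0 (Fin.last (k + 1)) Fin.last_pos.ne, psiMap_zero_apply, psiMap_last_apply]
  rintro i ⟨h0, hlast⟩
  exact psiMap_apply_of_ne l r f h0 hlast _

def psiEnds (f : (Fin (k + 1) → M) → B) (c d : M) (y : Fin (k + 2) → M) : N :=
  (-1 : ℤ) ^ (k + 2) • l c (f fun j => y j.succ) + r (f fun j => y j.castSucc) d

lemma hatD_psiMap (f : (Fin (k + 1) → M) → B) (w : Fin (k + 2) → M × M) :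
    hatD (psiMap l r f) w =
      (psiEnds l r f (w 0).1 (w (Fin.last (k + 1))).1 fun j => (w j).1,
        psiEnds l r f (w 0).2 (w (Fin.last (k + 1))).2 fun j => (w j).1) := by
  simp only [hatD, sum_psiMap_apply, psiEnds, Function.update_self,
    Function.update_of_ne (Fin.succ_ne_zero _), Function.update_of_ne (Fin.castSucc_lt_last _).ne]

end Psi

section Cases

variable {K A M B N : Type*} [CommSemiring K]
  [AddCommGroup A] [Module K A] [AddCommGroup M] [Module K M]
  [AddCommGroup B] [Module K B] [AddCommGroup N] [Module K N]
  {al : A →ₗ[K] M →ₗ[K] M} {ar : M →ₗ[K] A →ₗ[K] M} {R : M →ₗ[K] A} {S : N →ₗ[K] B}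
  {bl : A →ₗ[K] B →ₗ[K] B} {br : B →ₗ[K] A →ₗ[K] B}
  {nl : A →ₗ[K] N →ₗ[K] N} {nr : N →ₗ[K] A →ₗ[K] N}
  {l : M →ₗ[K] B →ₗ[K] N} {r : B →ₗ[K] M →ₗ[K] N} {k : ℕ}

local notation "ψ" => psiMap (fun x b => l x b) (fun b x => r b x)

local notation "δD" => deltaD (fun x y => ar x (R y)) (fun x y => al (R x) y) (fun x e => l x (S e)) (fun x e => nl (R x) e) (fun e x => nr e (R x)) (fun e x => r (S e) x)

local notation "δMB" => dMB (fun a x => al a x) (fun x a => ar x a) (fun a b => bl a b) (fun b a => br b a) (fun x => R x) (fun n => S n) (fun x b => l x b) (fun b x => r b x)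

local notation "μ" => semidirectMul (fun x y => ar x (R y)) (fun x y => al (R x) y)

lemma deltaD_psiMap_zero (hl2 : ∀ (m : M) (a : A) (b : B), l (ar m a) b = l m (bl a b))
    (hl3 : ∀ (m : M) (b : B) (a : A), l m (br b a) = nr (l m b) a)
    (f : (Fin (k + 1) → M) → B) (x : Fin (k + 1 + 1 + 1) → M) :
    δD (ψ f) 0 x = ψ (δMB f) 0 x := by
  rw [deltaD_apply]
  set z := liftAt 0 x
  have hz0 : z 0 = (0, x 0) := if_pos rfl
  have hz : ∀ j, j ≠ 0 → z j = (x j, 0) := fun _ h => if_neg h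
  have hlast : ∀ i, (mergeAt μ i z (Fin.last (k + 1))).2 = 0 := by
    intro i
    unfold mergeAt
    split_ifs <;> simp [semidirectMul, hz]
  simp only [hochD_apply, hatD_psiMap, Prod.snd_add, Prod.snd_sum, Prod.smul_snd, psiEnds, hz0,
    hlast]
  rw [sum_range_succ']
  simp [semidirectMul, fst_mergeAt_semidirectMul, hz, hz0]
  rw [psiMap_zero_apply, dMB, hochD_apply]
  simp only [map_add, map_sub, map_zsmul, map_sum, hl2, hl3, smul_add, smul_sub, smul_smul,
    Finset.smul_sum, ← pow_add, Fin.succ_zero_eq_one, Fin.succ_last]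
  have hsign : ∀ i, (-1 : ℤ) ^ (i + 1 + 1 + (k + 2)) = (-1) ^ (k + 1 + 1 + 1 + (i + 1)) :=
    fun i => by ring_nf
  simp only [hsign]
  rcases neg_one_pow_eq_or ℤ k with h | h <;> simp only [pow_add, pow_succ, h] <;> module

lemma deltaD_psiMap_last (hr1 : ∀ (a : A) (b : B) (m : M), r (bl a b) m = nl a (r b m))
    (hr2 : ∀ (b : B) (a : A) (m : M), r (br b a) m = r b (al a m))
    (f : (Fin (k + 1) → M) → B) (x : Fin (k + 1 + 1 + 1) → M) :
    δD (ψ f) (Fin.last (k + 1 + 1)) x = ψ (δMB f) (Fin.last (k + 1 + 1)) x := by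
  rw [deltaD_apply]
  set z := liftAt (Fin.last (k + 1 + 1)) x
  have hzl : z (Fin.last (k + 1 + 1)) = (0, x (Fin.last (k + 1 + 1))) := if_pos rfl
  have hz : ∀ j, j ≠ Fin.last (k + 1 + 1) → z j = (x j, 0) := fun _ h => if_neg h
  have h1 : (1 : Fin (k + 1 + 1 + 1)) ≠ Fin.last (k + 1 + 1) := by simp [Fin.ext_iff]
  have hzero : ∀ i, (mergeAt μ i z 0).2 = 0 := by
    rintro (_ | i) <;> simp [semidirectMul, hz, h1]
  have hlast : ∀ i < k + 1, (mergeAt μ i z (Fin.last (k + 1))).2 = x (Fin.last (k + 1 + 1)) :=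
    fun i hi => by rw [mergeAt_apply_last_of_lt _ hi, hzl]
  simp only [hochD_apply, hatD_psiMap, Prod.snd_add, Prod.snd_sum, Prod.smul_snd, psiEnds, hzl,
    hzero]
  rw [sum_range_succ, sum_congr rfl fun i hi => by rw [hlast i (mem_range.1 hi)],
    mergeAt_last_apply_last]
  simp [semidirectMul, fst_mergeAt_semidirectMul, hz, h1, hzl]
  rw [psiMap_last_apply, dMB, hochD_apply]
  simp only [map_add, map_sub, map_zsmul, map_sum, hr1, hr2, LinearMap.add_apply,
    LinearMap.sub_apply, LinearMap.smul_apply, LinearMap.coe_sum, Finset.sum_apply, smul_sub,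
    smul_smul, ← pow_add, Fin.castSucc_zero, Fin.succ_castSucc, mergeAt_apply_of_le _ le_rfl]
  rcases neg_one_pow_eq_or ℤ k with h | h <;> simp only [pow_add, pow_succ, h] <;> module

lemma deltaD_psiMap_of_ne (hl1 : ∀ (a : A) (m : M) (b : B), l (al a m) b = nl a (l m b))
    (hr3 : ∀ (b : B) (m : M) (a : A), r b (ar m a) = nr (r b m) a)
    (f : (Fin (k + 1) → M) → B) {i : Fin (k + 1 + 1 + 1)} (hi0 : i ≠ 0)
    (hil : i ≠ Fin.last (k + 1 + 1)) (x : Fin (k + 1 + 1 + 1) → M) :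
    δD (ψ f) i x = 0 := by
  rw [deltaD_apply]
  set z := liftAt i x
  have hz0 : z 0 = (x 0, 0) := if_neg hi0.symm
  have hzl : z (Fin.last (k + 1 + 1)) = (x (Fin.last (k + 1 + 1)), 0) := if_neg hil.symm
  have hlast : ∀ i < k + 1, (mergeAt μ i z (Fin.last (k + 1))).2 = 0 :=
    fun i hi => by rw [mergeAt_apply_last_of_lt _ hi, hzl]
  simp only [hochD_apply, hatD_psiMap, Prod.snd_add, Prod.snd_sum, Prod.smul_snd, psiEnds, hz0,
    Fin.succ_last, hzl]
  rw [sum_range_succ, sum_range_succ',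
    sum_eq_zero fun i hi => by simp [hlast (i + 1) (by simpa using hi), hz0]]
  simp [semidirectMul, fst_mergeAt_semidirectMul, hlast 0 k.succ_pos, mergeAt_last_apply_last,
    hz0, hzl, mergeAt_apply_of_le _ le_rfl, hl1, hr3]
  rcases neg_one_pow_eq_or ℤ k with h | h <;> simp only [pow_succ, h] <;> module

end Cases

theorem psi_is_chain_map_general
    {K : Type*} [Field K] {A M B N : Type*}
    [AddCommGroup A] [Module K A] [AddCommGroup M] [Module K M]
    [AddCommGroup B] [Module K B] [AddCommGroup N] [Module K N]
    (al : A →ₗ[K] M →ₗ[K] M) (ar : M →ₗ[K] A →ₗ[K] M)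
    (R : M →ₗ[K] A)
    (S : N →ₗ[K] B)
    (bl : A →ₗ[K] B →ₗ[K] B) (br : B →ₗ[K] A →ₗ[K] B)
    (nl : A →ₗ[K] N →ₗ[K] N) (nr : N →ₗ[K] A →ₗ[K] N)
    (l : M →ₗ[K] B →ₗ[K] N) (r : B →ₗ[K] M →ₗ[K] N)
    (hl1 : ∀ (a : A) (m : M) (b : B), l (al a m) b = nl a (l m b))
    (hl2 : ∀ (m : M) (a : A) (b : B), l (ar m a) b = l m (bl a b))
    (hl3 : ∀ (m : M) (b : B) (a : A), l m (br b a) = nr (l m b) a)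
    (hr1 : ∀ (a : A) (b : B) (m : M), r (bl a b) m = nl a (r b m))
    (hr2 : ∀ (b : B) (a : A) (m : M), r (br b a) m = r b (al a m))
    (hr3 : ∀ (b : B) (m : M) (a : A), r b (ar m a) = nr (r b m) a) :
    ∀ (k : ℕ), 1 ≤ k →
      ∀ (f : MultilinearMap K (fun _ : Fin k => M) B),
        deltaD
            -- the dendriform structure (M, ≺_R, ≻_R)
            (fun x y => ar x (R y)) (fun x y => al (R x) y)
            -- the induced representation of (M, ≺_R, ≻_R) on N
            (fun x e => l x (S e)) (fun x e => nl (R x) e)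
            (fun e x => nr e (R x)) (fun e x => r (S e) x)
            (psiMap (fun x b => l x b) (fun b x => r b x) (fun v => f v))
          = psiMap (fun x b => l x b) (fun b x => r b x)
              (dMB (fun a x => al a x) (fun x a => ar x a)
                (fun a b => bl a b) (fun b a => br b a)
                (fun x => R x) (fun n => S n)
                (fun x b => l x b) (fun b x => r b x) (fun v => f v)) := by
  intro k hk f
  obtain ⟨k, rfl⟩ := Nat.exists_eq_add_of_le' hk
  funext i x
  by_cases hi0 : i = 0
  · subst hi0
    exact deltaD_psiMap_zero hl2 hl3 _ x
  by_cases hil : i = Fin.last (k + 1 + 1)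
  · subst hil
    exact deltaD_psiMap_last hr1 hr2 _ x
  rw [deltaD_psiMap_of_ne hl1 hr3 _ hi0 hil, psiMap_apply_of_ne _ _ _ hi0 hil]

/-- The maps `ψ_k` commute with the differentials: `δ_D ∘ ψ_k = ψ_{k+1} ∘ δ_{M,B}`. -/
theorem psi_is_chain_map
    {K : Type*} [Field K] {A M B N : Type*}
    [AddCommGroup A] [Module K A] [AddCommGroup M] [Module K M]
    [AddCommGroup B] [Module K B] [AddCommGroup N] [Module K N]
    (mul : A →ₗ[K] A →ₗ[K] A)
    (hmul : ∀ a b c : A, mul (mul a b) c = mul a (mul b c))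
    (al : A →ₗ[K] M →ₗ[K] M) (ar : M →ₗ[K] A →ₗ[K] M)
    (hal : ∀ (a b : A) (m : M), al (mul a b) m = al a (al b m))
    (halr : ∀ (a : A) (m : M) (b : A), ar (al a m) b = al a (ar m b))
    (har : ∀ (m : M) (a b : A), ar (ar m a) b = ar m (mul a b))
    (R : M →ₗ[K] A)
    (hR : ∀ m m' : M, mul (R m) (R m') = R (al (R m) m' + ar m (R m')))
    (S : N →ₗ[K] B)
    (bl : A →ₗ[K] B →ₗ[K] B) (br : B →ₗ[K] A →ₗ[K] B)
    (hbl : ∀ (a a' : A) (b : B), bl (mul a a') b = bl a (bl a' b))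
    (hblr : ∀ (a : A) (b : B) (a' : A), br (bl a b) a' = bl a (br b a'))
    (hbr : ∀ (b : B) (a a' : A), br (br b a) a' = br b (mul a a'))
    (nl : A →ₗ[K] N →ₗ[K] N) (nr : N →ₗ[K] A →ₗ[K] N)
    (hnl : ∀ (a a' : A) (n : N), nl (mul a a') n = nl a (nl a' n))
    (hnlr : ∀ (a : A) (n : N) (a' : A), nr (nl a n) a' = nl a (nr n a'))
    (hnr : ∀ (n : N) (a a' : A), nr (nr n a) a' = nr n (mul a a'))
    (l : M →ₗ[K] B →ₗ[K] N) (r : B →ₗ[K] M →ₗ[K] N)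
    (hl1 : ∀ (a : A) (m : M) (b : B), l (al a m) b = nl a (l m b))
    (hl2 : ∀ (m : M) (a : A) (b : B), l (ar m a) b = l m (bl a b))
    (hl3 : ∀ (m : M) (b : B) (a : A), l m (br b a) = nr (l m b) a)
    (hr1 : ∀ (a : A) (b : B) (m : M), r (bl a b) m = nl a (r b m))
    (hr2 : ∀ (b : B) (a : A) (m : M), r (br b a) m = r b (al a m))
    (hr3 : ∀ (b : B) (m : M) (a : A), r b (ar m a) = nr (r b m) a)
    (hrs : ∀ (m : M) (n : N), bl (R m) (S n) = S (nl (R m) n + l m (S n)))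
    (hsr : ∀ (n : N) (m : M), br (S n) (R m) = S (r (S n) m + nr n (R m))) :
    ∀ (k : ℕ), 1 ≤ k →
      ∀ (f : MultilinearMap K (fun _ : Fin k => M) B),
        deltaD
            -- the dendriform structure (M, ≺_R, ≻_R)
            (fun x y => ar x (R y)) (fun x y => al (R x) y)
            -- the induced representation of (M, ≺_R, ≻_R) on N
            (fun x e => l x (S e)) (fun x e => nl (R x) e)
            (fun e x => nr e (R x)) (fun e x => r (S e) x)
            (psiMap (fun x b => l x b) (fun b x => r b x) (fun v => f v))
          = psiMap (fun x b => l x b) (fun b x => r b x)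
              (dMB (fun a x => al a x) (fun x a => ar x a)
                (fun a b => bl a b) (fun b a => br b a)
                (fun x => R x) (fun n => S n)
                (fun x b => l x b) (fun b x => r b x) (fun v => f v)) :=
  psi_is_chain_map_general al ar R S bl br nl nr l r hl1 hl2 hl3 hr1 hr2 hr3
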